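/- Let V be a Banach space, I = [0,a], and H ⊆ C(I, V) a bounded equicontinuous family. Then the map t ↦ μ({ξ(t) : ξ ∈ H}) is continuous on I and μ_{C(I,V)}(H) = sup_{s∈I} μ({ξ(s) : ξ ∈ H}), where μ_{C(I,V)} is the Hausdorff measure of noncompactness on C(I,V) with the supremum norm. -/
import Mathlib


open Metric Set

/-- Hausdorff measure of noncompactness: infimum of ε > 0 such that B has a finite ε-net. -/
noncomputable def hausdorffMNC {X : Type*} [MetricSpace X] (B : Set X) : ℝ :=
  sInf {ε : ℝ | 0 < ε ∧ ∃ F : Finset X, B ⊆ ⋃ x ∈ F, Metric.ball x ε}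

section Aux

variable {X : Type*} [MetricSpace X]

/-- The defining set of admissible radii. -/
def mncSet (B : Set X) : Set ℝ :=
  {ε : ℝ | 0 < ε ∧ ∃ F : Finset X, B ⊆ ⋃ x ∈ F, Metric.ball x ε}

lemma hausdorffMNC_def (B : Set X) : hausdorffMNC B = sInf (mncSet B) := rfl

lemma bddBelow_mncSet (B : Set X) : BddBelow (mncSet B) :=
  ⟨0, fun _ hε => hε.1.le⟩

lemma hausdorffMNC_nonneg (B : Set X) : 0 ≤ hausdorffMNC B :=
  Real.sInf_nonneg (fun _ hε => hε.1.le)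

lemma mncSet_nonempty {B : Set X} (hB : Bornology.IsBounded B) :
    (mncSet B).Nonempty := by
  rcases B.eq_empty_or_nonempty with rfl | ⟨x, hx⟩
  · exact ⟨1, one_pos, ∅, by simp⟩
  · obtain ⟨r, hr⟩ := hB.subset_closedBall x
    refine ⟨max r 0 + 1, by positivity, {x}, fun b hb => ?_⟩
    have hbx : dist b x ≤ r := mem_closedBall.1 (hr hb)
    have : dist b x < max r 0 + 1 :=
      lt_of_le_of_lt (hbx.trans (le_max_left r 0)) (by linarith)
    simp only [mem_iUnion, Finset.mem_singleton]
    exact ⟨x, rfl, mem_ball.2 this⟩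

lemma mnc_le_add {B B' : Set X} (h' : (mncSet B').Nonempty) {δ : ℝ} (hδ : 0 ≤ δ)
    (hd : ∀ b ∈ B, ∃ b' ∈ B', dist b b' ≤ δ) :
    hausdorffMNC B ≤ hausdorffMNC B' + δ := by
  rw [hausdorffMNC_def, hausdorffMNC_def, ← sub_le_iff_le_add]
  refine le_csInf h' fun ε hε => sub_le_iff_le_add.2 ?_
  obtain ⟨hε0, F, hF⟩ := hε
  refine csInf_le (bddBelow_mncSet B) ⟨by linarith, F, fun b hb => ?_⟩
  obtain ⟨b', hb', hbb'⟩ := hd b hb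
  have : b' ∈ ⋃ x ∈ F, Metric.ball x ε := hF hb'
  simp only [mem_iUnion] at this ⊢
  obtain ⟨x, hxF, hx⟩ := this
  have hx' : dist b' x < ε := mem_ball.1 hx
  exact ⟨x, hxF, mem_ball.2 (by
    calc dist b x ≤ dist b b' + dist b' x := dist_triangle _ _ _
      _ < ε + δ := by linarith)⟩

end Aux

/-- For a bounded equicontinuous family `H ⊆ C([0,a],V)`, the pointwise MNC is
continuous in `t` and the MNC of `H` in `C([0,a],V)` equals its supremum. -/
theorem hausdorffMNC_equicontinuous {V : Type*} [NormedAddCommGroup V]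
    [NormedSpace ℝ V] [CompleteSpace V] (a : ℝ) (ha : 0 < a)
    (H : Set C(Set.Icc (0:ℝ) a, V)) (hne : H.Nonempty)
    (hbdd : Bornology.IsBounded H)
    (hequi : Equicontinuous (fun f : H => (f : Set.Icc (0:ℝ) a → V))) :
    Continuous (fun s : Set.Icc (0:ℝ) a => hausdorffMNC {v : V | ∃ f ∈ H, f s = v}) ∧
      hausdorffMNC H =
        sSup (Set.range fun s : Set.Icc (0:ℝ) a =>
          hausdorffMNC {v : V | ∃ f ∈ H, f s = v}) := by
  classical
  haveI : Nonempty (Set.Icc (0:ℝ) a) := ⟨⟨0, le_refl 0, ha.le⟩⟩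
  set Hs : Set.Icc (0:ℝ) a → Set V := fun s => {v : V | ∃ f ∈ H, f s = v} with hHsdef
  set φ : Set.Icc (0:ℝ) a → ℝ := fun s => hausdorffMNC (Hs s) with hφdef
  -- boundedness of the sections
  obtain ⟨g0, hg0⟩ := hne
  obtain ⟨R, hR⟩ := hbdd.subset_closedBall g0
  have hHsb : ∀ s : Set.Icc (0:ℝ) a, Bornology.IsBounded (Hs s) := by
    intro s
    rw [Metric.isBounded_iff_subset_closedBall (g0 s)]
    refine ⟨R, ?_⟩
    rintro v ⟨f, hf, rfl⟩
    exact mem_closedBall.2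
      ((ContinuousMap.dist_apply_le_dist s).trans (mem_closedBall.1 (hR hf)))
  have hSs : ∀ s : Set.Icc (0:ℝ) a, (mncSet (Hs s)).Nonempty := fun s => mncSet_nonempty (hHsb s)
  have hSH : (mncSet H).Nonempty := mncSet_nonempty hbdd
  -- equicontinuity, metric form
  have heq : ∀ t : Set.Icc (0:ℝ) a, ∀ ε > (0:ℝ), ∃ d > (0:ℝ), ∀ s : Set.Icc (0:ℝ) a, dist s t < d →
      ∀ f ∈ H, dist (f t) (f s) < ε := by
    intro t ε hε
    obtain ⟨d, hd, hd'⟩ := Metric.equicontinuousAt_iff.1 (hequi t) ε hε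
    exact ⟨d, hd, fun s hs f hf => hd' s hs ⟨f, hf⟩⟩
  -- Part 1: continuity of φ
  have hcont : Continuous φ := by
    rw [Metric.continuous_iff]
    intro t ε hε
    obtain ⟨d, hd, hd'⟩ := heq t (ε / 2) (by linarith)
    refine ⟨d, hd, fun s hs => ?_⟩
    have h1 : φ s ≤ φ t + ε / 2 := by
      refine mnc_le_add (hSs t) (by linarith) ?_
      rintro v ⟨f, hf, rfl⟩
      exact ⟨f t, ⟨f, hf, rfl⟩, by
        have := hd' s hs f hf
        rw [dist_comm]
        linarith⟩
    have h2 : φ t ≤ φ s + ε / 2 := by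
      refine mnc_le_add (hSs s) (by linarith) ?_
      rintro v ⟨f, hf, rfl⟩
      exact ⟨f s, ⟨f, hf, rfl⟩, (hd' s hs f hf).le⟩
    rw [Real.dist_eq, abs_sub_lt_iff]
    constructor <;> linarith
  -- Part 2a: each φ s is at most the MNC of H
  have hle : ∀ s : Set.Icc (0:ℝ) a, φ s ≤ hausdorffMNC H := by
    intro s
    rw [hausdorffMNC_def H]
    refine le_csInf hSH fun ε hε => ?_
    obtain ⟨hε0, F, hF⟩ := hε
    refine csInf_le (bddBelow_mncSet _) ⟨hε0, F.image (fun g => g s), ?_⟩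
    rintro v ⟨f, hf, rfl⟩
    have : f ∈ ⋃ g ∈ F, Metric.ball g ε := hF hf
    simp only [mem_iUnion] at this ⊢
    obtain ⟨g, hgF, hg⟩ := this
    refine ⟨g s, Finset.mem_image_of_mem _ hgF, mem_ball.2 ?_⟩
    exact lt_of_le_of_lt (ContinuousMap.dist_apply_le_dist s) (mem_ball.1 hg)
  have hrne : (Set.range φ).Nonempty := Set.range_nonempty φ
  have hrbdd : BddAbove (Set.range φ) := ⟨hausdorffMNC H, by rintro x ⟨s, rfl⟩; exact hle s⟩
  set c := sSup (Set.range φ) with hcdef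
  have hφc : ∀ s : Set.Icc (0:ℝ) a, φ s ≤ c := fun s => le_csSup hrbdd ⟨s, rfl⟩
  have hc0 : 0 ≤ c := le_trans (hausdorffMNC_nonneg _) (hφc ⟨0, le_refl 0, ha.le⟩)
  have hc1 : c ≤ hausdorffMNC H := csSup_le hrne (by rintro x ⟨s, rfl⟩; exact hle s)
  -- Part 2b: MNC of H is at most c
  have hc2 : hausdorffMNC H ≤ c := by
    refine le_of_forall_pos_le_add ?_
    intro η hη
    set δ := η / 4 with hδdef
    have hδ : 0 < δ := by positivity
    -- neighborhoods from equicontinuity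
    have hU : ∀ t : Set.Icc (0:ℝ) a, ∃ d > (0:ℝ), ∀ s : Set.Icc (0:ℝ) a, dist s t < d → ∀ f ∈ H, dist (f t) (f s) < δ :=
      fun t => heq t δ hδ
    choose d hd hd' using hU
    -- finite subcover
    obtain ⟨T, hT⟩ := isCompact_univ.elim_finite_subcover (fun t : Set.Icc (0:ℝ) a => Metric.ball t (d t))
      (fun t => isOpen_ball) (fun x _ => mem_iUnion.2 ⟨x, mem_ball_self (hd x)⟩)
    -- partition of unity subordinate to the balls
    obtain ⟨ρ, hρ⟩ := PartitionOfUnity.exists_isSubordinate (s := (univ : Set (Set.Icc (0:ℝ) a)))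
      isClosed_univ (fun i : T => Metric.ball (i : Set.Icc (0:ℝ) a) (d i)) (fun i => isOpen_ball)
      (by
        intro x _
        have := hT (mem_univ x)
        simp only [mem_iUnion] at this ⊢
        obtain ⟨t, htT, hxt⟩ := this
        exact ⟨⟨t, htT⟩, hxt⟩)
    -- finite nets for the sections at the cover points
    have hnet : ∀ i : T, ∃ F : Finset V, Hs i ⊆ ⋃ v ∈ F, Metric.ball v (c + δ) := by
      intro i
      have h1 : sInf (mncSet (Hs i)) < c + δ := lt_of_le_of_lt (hφc i) (by linarith)
      obtain ⟨ε, hεm, hεlt⟩ := (csInf_lt_iff (bddBelow_mncSet _) (hSs i)).1 h1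
      obtain ⟨hε0, F, hF⟩ := hεm
      exact ⟨F, hF.trans (iUnion_mono fun v => iUnion_mono fun _ => ball_subset_ball hεlt.le)⟩
    choose F hF using hnet
    -- the candidate centers
    let g : (T → V) → C(Set.Icc (0:ℝ) a, V) := fun σ =>
      ⟨fun s => ∑ i : T, (ρ i s) • σ i,
        continuous_finset_sum _ fun i _ => ((ρ i).continuous).smul continuous_const⟩
    set G : Finset C(Set.Icc (0:ℝ) a, V) := (Fintype.piFinset (fun i : T => F i)).image g with hGdef
    -- H is covered by balls of radius c + 3δ around G
    have hcover : H ⊆ ⋃ h ∈ G, Metric.ball h (c + 3 * δ) := by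
      intro f hf
      have hpick : ∀ i : T, ∃ v ∈ F i, dist (f (i : Set.Icc (0:ℝ) a)) v < c + δ := by
        intro i
        have hm : f (i : Set.Icc (0:ℝ) a) ∈ Hs (i : Set.Icc (0:ℝ) a) := ⟨f, hf, rfl⟩
        have := hF i hm
        simpa only [mem_iUnion, mem_ball, exists_prop] using this
      choose σ hσF hσd using hpick
      have hσpi : σ ∈ Fintype.piFinset (fun i : T => F i) :=
        Fintype.mem_piFinset.2 hσF
      have hdist : dist f (g σ) ≤ c + 2 * δ := by
        rw [ContinuousMap.dist_le (by linarith)]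
        intro x
        have hsum : ∑ i : T, ρ i x = 1 := by
          have := ρ.sum_eq_one (mem_univ x)
          rwa [finsum_eq_sum_of_fintype] at this
        have hfx : f x = ∑ i : T, (ρ i x) • f x := by
          rw [← Finset.sum_smul, hsum, one_smul]
        have hrepr : f x - g σ x = ∑ i : T, (ρ i x) • (f x - σ i) := by
          simp only [g, ContinuousMap.coe_mk]
          rw [Finset.sum_congr rfl (fun i _ => smul_sub (ρ i x) (f x) (σ i)),
            Finset.sum_sub_distrib, ← hfx]
        rw [dist_eq_norm, hrepr]
        calc ‖∑ i : T, (ρ i x) • (f x - σ i)‖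
            ≤ ∑ i : T, ‖(ρ i x) • (f x - σ i)‖ := norm_sum_le _ _
          _ ≤ ∑ i : T, (ρ i x) * (c + 2 * δ) := by
              refine Finset.sum_le_sum fun i _ => ?_
              rw [norm_smul, Real.norm_of_nonneg (ρ.nonneg i x)]
              rcases eq_or_ne (ρ i x) 0 with h0 | h0
              · simp [h0]
              · refine mul_le_mul_of_nonneg_left ?_ (ρ.nonneg i x)
                have hxU : x ∈ Metric.ball (i : Set.Icc (0:ℝ) a) (d i) :=
                  hρ i (subset_tsupport _ h0)
                have h1 : dist (f (i : Set.Icc (0:ℝ) a)) (f x) < δ :=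
                  hd' i x (mem_ball.1 hxU) f hf
                have h2 : dist (f (i : Set.Icc (0:ℝ) a)) (σ i) < c + δ := hσd i
                calc ‖f x - σ i‖ = dist (f x) (σ i) := (dist_eq_norm _ _).symm
                  _ ≤ dist (f x) (f (i : Set.Icc (0:ℝ) a)) + dist (f (i : Set.Icc (0:ℝ) a)) (σ i) := dist_triangle _ _ _
                  _ ≤ δ + (c + δ) := by
                      rw [dist_comm (f x)]
                      linarith
                  _ = c + 2 * δ := by ring
          _ = (∑ i : T, ρ i x) * (c + 2 * δ) := by rw [Finset.sum_mul]
          _ = c + 2 * δ := by rw [hsum, one_mul]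
      have : f ∈ Metric.ball (g σ) (c + 3 * δ) :=
        mem_ball.2 (lt_of_le_of_lt hdist (by linarith))
      simp only [mem_iUnion]
      exact ⟨g σ, Finset.mem_image_of_mem _ hσpi, this⟩
    have hmem : (c + 3 * δ) ∈ mncSet H := ⟨by linarith, G, hcover⟩
    have : hausdorffMNC H ≤ c + 3 * δ := csInf_le (bddBelow_mncSet _) hmem
    linarith
  exact ⟨hcont, le_antisymm hc2 hc1⟩
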